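/- Let R = (R_i)_{i∈Ā} be an ε̄-local optimum (with equal weights 1/n) with respect to the endowed valuations v̄_i, with prices p_j as defined and ε̂ := (1+ε̄)^n − 1. Then: (a) p_j ≤ 1 for every item j ∈ J; (b) for every agent k ∈ Ā and every item j ∈ J ∖ R_k, v̄_k(R_k ∪ {j}) / v̄_k(R_k) ≤ (1+ε̂)·(1 + p_j); and (c) for every agent k ∈ Ā and every set T ⊆ J, v̄_k(R_k ∪ T) / v̄_k(R_k) ≤ 1 + Σ_{j∈T} (2ε̂ + p_j). -/

import Mathlib

/-!
Submodularity makes the marginal gain of a set `T` over `R_k` at most the sum of the marginal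
gains of its items, so (c) follows from (b) item by item, using (a) to absorb the cross term
`ε̂ p_j` into a second `ε̂`. For (b), the local-optimality inequality for moving `j` from its owner
`i` to `k` is exactly the claim after dividing by `v̄_i(R_i ∖ {j}) / v̄_i(R_i) = 1 / (1 + p_j)`.
For (a), submodularity gives `v_i(R_i) ≤ v_i(R_i ∖ {j}) + v_i({j})`, and the endowment
`v_i(ℓ(i)) ≥ v_i({j})` makes this at most twice `v̄_i(R_i ∖ {j})`.
-/

open Finset

section SetFunction

variable {J : Type*} [DecidableEq J]

def IsSubmodular (f : Finset J → ℝ) : Prop :=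
  ∀ S T, f (S ∩ T) + f (S ∪ T) ≤ f S + f T

noncomputable def price (g : Finset J → ℝ) (S : Finset J) (j : J) : ℝ :=
  g S / g (S.erase j) - 1

namespace IsSubmodular

variable {f : Finset J → ℝ}

theorem const_add (hf : IsSubmodular f) (c : ℝ) : IsSubmodular (fun S => c + f S) :=
  fun S T => by linarith [hf S T]

theorem le_add_of_disjoint (hf : IsSubmodular f) (h0 : f ∅ = 0) {S T : Finset J}
    (hST : Disjoint S T) : f (S ∪ T) ≤ f S + f T := by
  simpa [disjoint_iff_inter_eq_empty.mp hST, h0] using hf S T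

theorem le_sum_singleton (hf : IsSubmodular f) (h0 : f ∅ = 0) (S : Finset J) :
    f S ≤ ∑ j ∈ S, f {j} := by
  induction S using Finset.induction_on with
  | empty => simp [h0]
  | insert a s ha ih =>
    rw [sum_insert ha, insert_eq]
    linarith [hf.le_add_of_disjoint h0 (disjoint_singleton_left.mpr ha)]

theorem le_erase_add_singleton (hf : IsSubmodular f) (hmono : Monotone f) (h0 : f ∅ = 0)
    (S : Finset J) (j : J) : f S ≤ f (S.erase j) + f {j} :=
  calc f S ≤ f (S.erase j ∪ {j}) := hmono fun x hx => by by_cases x = j <;> simp_all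
    _ ≤ f (S.erase j) + f {j} := hf.le_add_of_disjoint h0 (by simp)

theorem sub_le_sum_sub (hf : IsSubmodular f) (B T : Finset J) :
    f (B ∪ T) - f B ≤ ∑ j ∈ T, (f (B ∪ {j}) - f B) := by
  induction T using Finset.induction_on with
  | empty => simp
  | insert a s ha ih =>
    have hinter : (B ∪ s) ∩ (B ∪ {a}) = B := by
      rw [← union_inter_distrib_left, disjoint_iff_inter_eq_empty.mp
        (disjoint_singleton_right.mpr ha), union_empty]
    have hunion : B ∪ s ∪ (B ∪ {a}) = B ∪ insert a s := by
      ext x; simp only [mem_union, mem_insert, mem_singleton]; tauto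
    have := hf (B ∪ s) (B ∪ {a})
    rw [hinter, hunion] at this
    rw [sum_insert ha]
    linarith

theorem div_le_one_add_sum (hf : IsSubmodular f) {B T : Finset J} (hB : 0 < f B) {q : J → ℝ}
    (hq : ∀ j ∈ T, f (B ∪ {j}) / f B ≤ 1 + q j) : f (B ∪ T) / f B ≤ 1 + ∑ j ∈ T, q j := by
  have hgain : ∀ j ∈ T, f (B ∪ {j}) - f B ≤ q j * f B := fun j hj => by
    have := hq j hj
    rw [div_le_iff₀ hB] at this
    linarith
  rw [div_le_iff₀ hB, add_mul, one_mul, sum_mul]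
  linarith [hf.sub_le_sum_sub B T, sum_le_sum hgain]

theorem singleton_pos_of_univ_pos [Fintype J] (hf : IsSubmodular f) (h0 : f ∅ = 0)
    (hpos : 0 < f univ) {ℓ : J} (hℓ : ∀ j, f {j} ≤ f {ℓ}) : 0 < f {ℓ} := by
  by_contra! h
  have := hf.le_sum_singleton h0 univ
  linarith [sum_nonpos fun j (_ : j ∈ univ) => (hℓ j).trans h]

end IsSubmodular

theorem endowed_le_two_mul_erase {f : Finset J → ℝ} (hf : IsSubmodular f) (hmono : Monotone f)
    (h0 : f ∅ = 0) {ℓ j : J} (hℓ : f {j} ≤ f {ℓ}) (S : Finset J) :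
    f {ℓ} + f S ≤ 2 * (f {ℓ} + f (S.erase j)) := by
  have hnonneg : 0 ≤ f (S.erase j) := h0 ▸ hmono (empty_subset _)
  linarith [hf.le_erase_add_singleton hmono h0 S j]

section price

variable {g : Finset J → ℝ} {S : Finset J} {j : J}

theorem price_nonneg (hmono : Monotone g) (hpos : 0 < g (S.erase j)) : 0 ≤ price g S j := by
  rw [price, sub_nonneg, one_le_div hpos]
  exact hmono (erase_subset j S)

theorem price_le_one (hpos : 0 < g (S.erase j)) (h : g S ≤ 2 * g (S.erase j)) :
    price g S j ≤ 1 := by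
  rw [price, sub_le_iff_le_add, div_le_iff₀ hpos]
  linarith

theorem le_mul_one_add_price (hpos : 0 < g (S.erase j)) (hS : 0 < g S) {x c : ℝ}
    (h : g (S.erase j) / g S * x ≤ c) : x ≤ c * (1 + price g S j) := by
  rw [price, add_sub_cancel, mul_div_assoc', le_div_iff₀ hpos]
  rw [div_mul_eq_mul_div, div_le_iff₀ hS] at h
  linarith

end price

end SetFunction

theorem sub_one_le_two_mul_add {x ε p : ℝ} (hε : 0 ≤ ε) (hp : p ≤ 1)
    (hx : x ≤ (1 + ε) * (1 + p)) : x - 1 ≤ 2 * ε + p := by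
  nlinarith

theorem symmetric_local_opt_price_bounds_general {J A : Type*} [Fintype J] [DecidableEq J]
    (n : ℕ)
    (v : A → Finset J → ℝ)
    (hmono : ∀ i, ∀ S T : Finset J, S ⊆ T → v i S ≤ v i T)
    (hsubmod : ∀ i, ∀ S T : Finset J, v i (S ∩ T) + v i (S ∪ T) ≤ v i S + v i T)
    (hv0 : ∀ i, v i ∅ = 0) (hvJ : ∀ i, 0 < v i (univ : Finset J))
    (ℓ : A → J) (hℓ : ∀ i, ∀ j : J, v i {j} ≤ v i {ℓ i})
    (vb : A → Finset J → ℝ) (hvb : ∀ i S, vb i S = v i {ℓ i} + v i S)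
    (R : A → Finset J)
    (owner : J → A) (howner : ∀ j : J, j ∈ R (owner j))
    (ε' : ℝ) (hε' : 0 ≤ ε')
    (hloc : ∀ i k, i ≠ k → ∀ j ∈ R i,
      (vb i ((R i).erase j) / vb i (R i)) *
        (vb k (R k ∪ {j}) / vb k (R k)) ≤ (1 + ε') ^ n)
    (p : J → ℝ)
    (hp : ∀ j : J, p j =
      vb (owner j) (R (owner j)) / vb (owner j) ((R (owner j)).erase j) - 1)
    (ε'' : ℝ) (hε'' : ε'' = (1 + ε') ^ n - 1) :
    (∀ j : J, p j ≤ 1) ∧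
    (∀ (k : A) (j : J), j ∉ R k →
        vb k (R k ∪ {j}) / vb k (R k) ≤ (1 + ε'') * (1 + p j)) ∧
    (∀ (k : A) (T : Finset J),
        vb k (R k ∪ T) / vb k (R k) ≤ 1 + ∑ j ∈ T, (2 * ε'' + p j)) := by
  have hvb_eq : vb = fun i S => v i {ℓ i} + v i S := funext₂ hvb
  have hv_mono : ∀ i, Monotone (v i) := fun i S T h => hmono i S T h
  have hv_submod : ∀ i, IsSubmodular (v i) := hsubmod
  have hvb_pos : ∀ i S, 0 < vb i S := fun i S => by
    rw [hvb]
    linarith [(hv_submod i).singleton_pos_of_univ_pos (hv0 i) (hvJ i) (hℓ i),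
      hv0 i ▸ hv_mono i (empty_subset S)]
  have hvb_submod : ∀ i, IsSubmodular (vb i) := fun i => hvb_eq ▸ (hv_submod i).const_add _
  have hvb_mono : ∀ i, Monotone (vb i) := fun i => hvb_eq ▸ (hv_mono i).const_add _
  have hp_nonneg : ∀ j, 0 ≤ p j := fun j => hp j ▸ price_nonneg (hvb_mono _) (hvb_pos _ _)
  have hp_le_one : ∀ j, p j ≤ 1 := fun j => hp j ▸ price_le_one (hvb_pos _ _) (by
    simpa only [hvb] using endowed_le_two_mul_erase (hsubmod _) (hv_mono _) (hv0 _) (hℓ _ j) _)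
  have hgain_le : ∀ k j, j ∉ R k → vb k (R k ∪ {j}) / vb k (R k) ≤ (1 + ε'') * (1 + p j) :=
    fun k j hj => by
      have hne : owner j ≠ k := fun h => hj (h ▸ howner j)
      rw [hp j, ← price, hε'', add_sub_cancel]
      exact le_mul_one_add_price (hvb_pos _ _) (hvb_pos _ _) (hloc _ k hne j (howner j))
  have hε''_nonneg : 0 ≤ ε'' := by
    rw [hε'']
    linarith [one_le_pow₀ (n := n) (by linarith : 1 ≤ 1 + ε')]
  refine ⟨hp_le_one, hgain_le, fun k T =>
    (hvb_submod k).div_le_one_add_sum (hvb_pos k _) fun j _ => ?_⟩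
  by_cases hj : j ∈ R k
  · rw [union_eq_left.mpr (singleton_subset_iff.mpr hj), div_self (hvb_pos k _).ne']
    linarith [hp_nonneg j]
  · linarith [sub_one_le_two_mul_add hε''_nonneg (hp_le_one j) (hgain_le k j hj)]

/-- (Properties of prices, symmetric case.)
For an `ε̄`-local optimum `R` (with equal weights `1/n`) with prices `p` and
`ε̂ := (1+ε̄)^n − 1`:
(a) `p_j ≤ 1` for every item `j`;
(b) for every agent `k` and every item `j ∉ R_k`,
`v̄_k(R_k ∪ {j}) / v̄_k(R_k) ≤ (1+ε̂)·(1+p_j)`;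
(c) for every agent `k` and every `T ⊆ J`,
`v̄_k(R_k ∪ T) / v̄_k(R_k) ≤ 1 + Σ_{j∈T} (2ε̂ + p_j)`. -/
theorem symmetric_local_opt_price_bounds {J A : Type*} [Fintype J] [DecidableEq J]
    [Fintype A] [Nonempty A]
    (n : ℕ) (hn1 : 1 ≤ n) (hAn : Fintype.card A ≤ n)
    (v : A → Finset J → ℝ)
    (hmono : ∀ i, ∀ S T : Finset J, S ⊆ T → v i S ≤ v i T)
    (hsubmod : ∀ i, ∀ S T : Finset J, v i (S ∩ T) + v i (S ∪ T) ≤ v i S + v i T)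
    (hv0 : ∀ i, v i ∅ = 0) (hvJ : ∀ i, 0 < v i (univ : Finset J))
    (ℓ : A → J) (hℓ : ∀ i, ∀ j : J, v i {j} ≤ v i {ℓ i})
    (vb : A → Finset J → ℝ) (hvb : ∀ i S, vb i S = v i {ℓ i} + v i S)
    (R : A → Finset J)
    (hdisj : ∀ i k, i ≠ k → Disjoint (R i) (R k))
    (owner : J → A) (howner : ∀ j : J, j ∈ R (owner j))
    (ε' : ℝ) (hε' : 0 ≤ ε')
    (hloc : ∀ i k, i ≠ k → ∀ j ∈ R i,
      (vb i ((R i).erase j) / vb i (R i)) *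
        (vb k (R k ∪ {j}) / vb k (R k)) ≤ (1 + ε') ^ n)
    (p : J → ℝ)
    (hp : ∀ j : J, p j =
      vb (owner j) (R (owner j)) / vb (owner j) ((R (owner j)).erase j) - 1)
    (ε'' : ℝ) (hε'' : ε'' = (1 + ε') ^ n - 1) :
    (∀ j : J, p j ≤ 1) ∧
    (∀ (k : A) (j : J), j ∉ R k →
        vb k (R k ∪ {j}) / vb k (R k) ≤ (1 + ε'') * (1 + p j)) ∧
    (∀ (k : A) (T : Finset J),
        vb k (R k ∪ T) / vb k (R k) ≤ 1 + ∑ j ∈ T, (2 * ε'' + p j)) :=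
  symmetric_local_opt_price_bounds_general n v hmono hsubmod hv0 hvJ ℓ hℓ vb hvb R owner howner ε'
    hε' hloc p hp ε'' hε''
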